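/- Let (g, •) be a finite-dimensional real left symmetric algebra whose Koszul form B is positive definite, and let H be the vector with B(X,H) = tr(L_X) for all X. Then H•H = H. -/

import Mathlib

/-!
Left symmetry says `L_{X•Y} - L_{Y•X} = [L_X, L_Y]`, so taking traces makes the Koszul form
`B(X, Y) = tr L_{X•Y}` symmetric. Applying `tr ∘ L` to the left-symmetry identity for
`(X, H, H)` and using `B(Y, H) = tr L_Y` three times turns it into `B(X, H•H) = B(X, H)` for
every `X`; positive definiteness then forces `H•H = H`.
-/

namespace LinearMap.BilinForm

variable {R M : Type*} [CommRing R] [AddCommGroup M] [Module R M]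

theorem eq_of_forall_apply_eq_of_anisotropic (B : LinearMap.BilinForm R M)
    (hB : ∀ x, B x x = 0 → x = 0) {y z : M} (h : ∀ x, B x y = B x z) : y = z := by
  refine sub_eq_zero.mp (hB _ ?_)
  rw [map_sub (B (y - z)), h, sub_self]

end LinearMap.BilinForm

section LeftSymmetric

variable {R A : Type*} [CommRing R] [AddCommGroup A] [Module R A]

def IsLeftSymmetric (mul : A →ₗ[R] A →ₗ[R] A) : Prop :=
  ∀ X Y Z : A, mul (mul X Y) Z - mul X (mul Y Z) = mul (mul Y X) Z - mul Y (mul X Z)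

noncomputable def koszulForm (mul : A →ₗ[R] A →ₗ[R] A) : LinearMap.BilinForm R A :=
  mul.compr₂ (LinearMap.trace R A ∘ₗ mul)

variable {mul : A →ₗ[R] A →ₗ[R] A}

theorem koszulForm_apply (X Y : A) :
    koszulForm mul X Y = LinearMap.trace R A (mul (mul X Y)) :=
  rfl

namespace IsLeftSymmetric

variable (hmul : IsLeftSymmetric mul)
include hmul

theorem mul_sub_mul_comm_eq_lie (X Y : A) :
    mul (mul X Y) - mul (mul Y X) = ⁅mul X, mul Y⁆ := by
  ext Z
  simpa [Ring.lie_def, sub_eq_sub_iff_sub_eq_sub] using hmul X Y Z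

theorem koszulForm_comm (X Y : A) : koszulForm mul X Y = koszulForm mul Y X := by
  rw [koszulForm_apply, koszulForm_apply, ← sub_eq_zero, ← map_sub,
    hmul.mul_sub_mul_comm_eq_lie, LinearMap.trace_lie]

theorem koszulForm_mul_self_right {H : A}
    (hH : ∀ X, koszulForm mul X H = LinearMap.trace R A (mul X)) (X : A) :
    koszulForm mul X (mul H H) = koszulForm mul X H := by
  have hXH : koszulForm mul (mul X H) H = koszulForm mul X H := hH _
  have hHX : koszulForm mul (mul H X) H = koszulForm mul H X := hH _
  have htrace := congrArg (fun W => LinearMap.trace R A (mul W)) (hmul X H H)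
  simp only [map_sub, ← koszulForm_apply] at htrace
  rw [hXH, hHX, hmul.koszulForm_comm H (mul X H), hXH, hmul.koszulForm_comm H X] at htrace
  linear_combination -htrace

end IsLeftSymmetric

end LeftSymmetric

theorem H_idempotent_general (g : Type*) [AddCommGroup g] [Module ℝ g]
    (mul : g →ₗ[ℝ] g →ₗ[ℝ] g)
    (lsym : ∀ X Y Z : g,
      mul (mul X Y) Z - mul X (mul Y Z) = mul (mul Y X) Z - mul Y (mul X Z))
    (B : g → g → ℝ)
    (hB : ∀ X Y : g, B X Y = LinearMap.trace ℝ g (mul (mul X Y)))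
    (posdef : ∀ X : g, X ≠ 0 → 0 < B X X)
    (H : g) (hH : ∀ X : g, B X H = LinearMap.trace ℝ g (mul X)) :
    mul H H = H := by
  have hmul : IsLeftSymmetric mul := lsym
  have hBK : ∀ X Y, B X Y = koszulForm mul X Y := hB
  have hanis : ∀ X, koszulForm mul X X = 0 → X = 0 := fun X hX => by
    by_contra hne
    exact (posdef X hne).ne' (hBK X X ▸ hX)
  exact (koszulForm mul).eq_of_forall_apply_eq_of_anisotropic hanis
    (hmul.koszulForm_mul_self_right fun X => (hBK X H).symm.trans (hH X))

/-- In a finite-dimensional real left symmetric algebra with positive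
definite Koszul form `B`, the vector `H` representing `X ↦ tr(L_X)`
satisfies `H • H = H`. -/
theorem H_idempotent (g : Type*) [AddCommGroup g] [Module ℝ g]
    [FiniteDimensional ℝ g] (mul : g →ₗ[ℝ] g →ₗ[ℝ] g)
    (lsym : ∀ X Y Z : g,
      mul (mul X Y) Z - mul X (mul Y Z) = mul (mul Y X) Z - mul Y (mul X Z))
    (B : g → g → ℝ)
    (hB : ∀ X Y : g, B X Y = LinearMap.trace ℝ g (mul (mul X Y)))
    (posdef : ∀ X : g, X ≠ 0 → 0 < B X X)
    (H : g) (hH : ∀ X : g, B X H = LinearMap.trace ℝ g (mul X)) :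
    mul H H = H :=
  H_idempotent_general g mul lsym B hB posdef H hH
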